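/- Let M = Z/2[a,u] ⊕ NC be the square-zero extension ring with NC as above, and grade it over Z ⊕ Zσ with |a| = σ, |u| = -1+σ, |θ/(a^m u^n)| = (2+n) + (-2-m-n)σ. Then M is graded-commutative and moreover strictly commutative, and every homogeneous element x of degree α + pσ with α ≥ 1 and p ≥ 0 is zero. -/

import Mathlib

noncomputable section

/-- The field `ℤ/2`. -/
abbrev k2 : Type := ZMod 2

/-- The polynomial ring `ℤ/2[a,u]`, realized as `(ℤ/2[u])[a]`. -/
abbrev Rau : Type := Polynomial (Polynomial k2)

/-- The variable `a`. -/
def aR : Rau := Polynomial.X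

/-- The variable `u`. -/
def uR : Rau := Polynomial.C Polynomial.X

/-- Given two commuting `ℤ/2`-linear endomorphisms `A`, `U` of `M`, the ring
homomorphism `ℤ/2[a,u] → End M` sending `a ↦ A`, `u ↦ U`. -/
def mkPhi {M : Type} [AddCommGroup M] [Module k2 M] (A U : Module.End k2 M)
    (hAU : Commute A U) : Rau →+* Module.End k2 M :=
  Polynomial.eval₂RingHom'
    (Polynomial.eval₂RingHom' (algebraMap k2 (Module.End k2 M)) U fun c => Algebra.commutes c U)
    A (by
      intro p
      induction p using Polynomial.induction_on with
      | C c =>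
          change Commute (Polynomial.eval₂ (algebraMap k2 (Module.End k2 M)) U (Polynomial.C c)) A
          rw [Polynomial.eval₂_C]
          exact Algebra.commutes c A
      | add p q hp hq =>
          simpa [map_add] using hp.add_left hq
      | monomial n c h =>
          have hx : (Polynomial.eval₂RingHom' (algebraMap k2 (Module.End k2 M)) U
              fun c => Algebra.commutes c U) (Polynomial.C c * Polynomial.X ^ (n + 1)) =
              (Polynomial.eval₂RingHom' (algebraMap k2 (Module.End k2 M)) U
              fun c => Algebra.commutes c U) (Polynomial.C c * Polynomial.X ^ n) * U := by
            rw [pow_succ, ← mul_assoc, map_mul]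
            exact congrArg (_ * ·) (Polynomial.eval₂_X _ _)
          rw [hx]
          exact h.mul_left hAU.symm)

/-- The negative cone `NC`, with `ℤ/2`-basis `θ/(aᵐuⁿ)` indexed by `(m, n) ∈ ℕ × ℕ`. -/
abbrev NC : Type := (ℕ × ℕ) →₀ k2

/-- The basis element `θ/(aᵐuⁿ)` of `NC`. -/
def θ (m n : ℕ) : NC := Finsupp.single (m, n) 1

/-- The action of `a` on `NC`: lower `m`, killing `m = 0`. -/
def Aop : Module.End k2 NC :=
  Finsupp.lsum k2 fun p => if p.1 = 0 then 0 else Finsupp.lsingle (p.1 - 1, p.2)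

/-- The action of `u` on `NC`: lower `n`, killing `n = 0`. -/
def Uop : Module.End k2 NC :=
  Finsupp.lsum k2 fun p => if p.2 = 0 then 0 else Finsupp.lsingle (p.1, p.2 - 1)

lemma comm_AU : Commute Aop Uop := by
  rw [Commute, SemiconjBy]
  refine Finsupp.lhom_ext fun p c => ?_
  obtain ⟨m, n⟩ := p
  rcases m with _ | m <;> rcases n with _ | n <;>
    simp [Module.End.mul_apply, Aop, Uop, Finsupp.lsum_single]

/-- The `ℤ/2[a,u]`-module structure on the negative cone. -/
instance : Module Rau NC := Module.compHom NC (mkPhi Aop Uop comm_AU)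

/-- The `ℤ/2[a,u]ᵐᵒᵖ`-module structure on the negative cone. -/
instance : Module Rauᵐᵒᵖ NC :=
  Module.compHom NC ((mkPhi Aop Uop comm_AU).comp
    ((RingHom.id Rau).fromOpposite fun x y => mul_comm x y))

instance : IsCentralScalar Rau NC := ⟨fun _ _ => rfl⟩

open TrivSqZeroExt in
/-- The homogeneous component of `M = ℤ/2[a,u] ⊕ NC` in degree `α + pσ`, where
`|a| = σ`, `|u| = -1 + σ` (so `aʲuᵏ` has degree `-k + (j+k)σ`) and
`|θ/(aᵐuⁿ)| = (2+n) + (-2-m-n)σ`. -/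
def compM (α p : ℤ) : Submodule k2 (TrivSqZeroExt Rau NC) :=
  Submodule.span k2
    ({x | ∃ j k : ℕ, -(k : ℤ) = α ∧ (j : ℤ) + k = p ∧
        x = (inl (aR ^ j * uR ^ k) : TrivSqZeroExt Rau NC)} ∪
     {x | ∃ m n : ℕ, (2 : ℤ) + n = α ∧ -2 - (m : ℤ) - n = p ∧
        x = (inr (θ m n) : TrivSqZeroExt Rau NC)})

/-- the square-zero extension `M = ℤ/2[a,u] ⊕ NC` is (graded-)commutative,
indeed strictly commutative, and every homogeneous component `M^{α+pσ}` with `α ≥ 1` and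
`p ≥ 0` vanishes. -/
theorem stmt19 :
    (∀ x y : TrivSqZeroExt Rau NC, x * y = y * x) ∧
    (∀ α p : ℤ, 1 ≤ α → 0 ≤ p → compM α p = ⊥) := by
  constructor
  · intro x y
    exact mul_comm x y
  · intro α p hα hp
    rw [compM, Submodule.span_eq_bot]
    rintro x (⟨j, k, h1, h2, rfl⟩ | ⟨m, n, h1, h2, rfl⟩) <;> exfalso <;> omega
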